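/- Under the Robinson–Schensted–Knuth correspondence applied to an M×M matrix (w(i,j)) of nonnegative integers, the resulting common shape λ of the pair of semistandard tableaux has first row λ_1 equal to the maximum over up/right paths π from (1,1) to (M,M) of Σ_{(i,j)∈π} w(i,j). -/

import Mathlib

/-- RSK row insertion: insert `x` into a weakly increasing row, returning the new row
and the bumped entry (if any).  The entry bumped is the leftmost one that is `> x`;
if every entry is `≤ x`, then `x` is appended at the end of the row. -/
def rowInsert (x : ℕ) : List ℕ → List ℕ × Option ℕ
  | [] => ([x], none)
  | y :: ys =>
    if x < y then (x :: ys, some y)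
    else
      let p := rowInsert x ys
      (y :: p.1, p.2)

/-- RSK insertion of `x` into a semistandard tableau, given as its list of rows. -/
def tableauInsert (x : ℕ) : List (List ℕ) → List (List ℕ)
  | [] => [[x]]
  | r :: rs =>
    match rowInsert x r with
    | (r', none) => r' :: rs
    | (r', some y) => r' :: tableauInsert y rs

/-- The insertion (P-) tableau of the RSK correspondence applied to a word. -/
def rskTableau (w : List ℕ) : List (List ℕ) :=
  w.foldl (fun t x => tableauInsert x t) []

/-- The word of the matrix `(w(i,j))_{1 ≤ i,j ≤ M}` (the bottom row of the associated
biword, in lexicographic order): for `i = 1, …, M` and `j = 1, …, M`, the letter `j`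
is repeated `w(i,j)` times. -/
def matrixWord (M : ℕ) (w : ℕ × ℕ → ℕ) : List ℕ :=
  (List.range M).flatMap fun i =>
    (List.range M).flatMap fun j => List.replicate (w (i + 1, j + 1)) (j + 1)

/-- `p` is an up/right lattice path from `(1,1)` to `(M,N)`. -/
def IsUpRightPath (M N : ℕ) (p : List (ℕ × ℕ)) : Prop :=
  p.head? = some (1, 1) ∧ p.getLast? = some (M, N) ∧
    p.Chain' fun u v => v = (u.1 + 1, u.2) ∨ v = (u.1, u.2 + 1)

/-!
Only the first row of the insertion tableau matters, and it evolves by row insertion alone: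
inserting `x` into a sorted row replaces its leftmost entry `> x` by `x`. Hence, for every `v`,
the number of entries `≤ v` in the first row equals the length of a longest weakly increasing
subsequence of the word with entries `≤ v` (Schensted), and `λ₁` is the length of a longest
weakly increasing subsequence of the matrix word.

Tag each letter of the matrix word with the cell it comes from. A weakly increasing subsequence
then becomes a list of cells, weakly increasing in both coordinates, that uses each cell `(i, j)`
at most `w (i, j)` times; an up/right path through all of these cells has a sum at least the
length of the subsequence. Conversely, all letters of the cells of a path, read along the path,
form a weakly increasing subsequence whose length is the path sum.
-/

open List

def firstRow (w : List ℕ) : List ℕ :=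
  w.foldl (fun r x => (rowInsert x r).1) []

theorem headD_tableauInsert (x : ℕ) (t : List (List ℕ)) :
    (tableauInsert x t).headD [] = (rowInsert x (t.headD [])).1 := by
  cases t with
  | nil => rfl
  | cons r rs => rcases h : rowInsert x r with ⟨r', _ | _⟩ <;> simp [tableauInsert, h]

theorem headD_rskTableau (w : List ℕ) : (rskTableau w).headD [] = firstRow w :=
  (foldl_hom (fun t : List (List ℕ) => t.headD []) fun t x =>
    (headD_tableauInsert x t).symm).symm

theorem firstRow_append_singleton (w : List ℕ) (x : ℕ) :
    firstRow (w ++ [x]) = (rowInsert x (firstRow w)).1 :=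
  foldl_append ..

theorem mem_of_mem_rowInsert_fst {a x : ℕ} {r : List ℕ} (h : a ∈ (rowInsert x r).1) :
    a = x ∨ a ∈ r := by
  induction r with
  | nil => simpa [rowInsert] using h
  | cons y ys ih =>
    unfold rowInsert at h
    split_ifs at h <;> grind

theorem pairwise_rowInsert_fst {r : List ℕ} (x : ℕ) (hr : r.Pairwise (· ≤ ·)) :
    (rowInsert x r).1.Pairwise (· ≤ ·) := by
  induction r with
  | nil => simp [rowInsert]
  | cons y ys ih =>
    obtain ⟨hy, hys⟩ := pairwise_cons.1 hr
    unfold rowInsert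
    split_ifs with hxy
    · exact pairwise_cons.2 ⟨fun b hb => by grind, hys⟩
    · refine pairwise_cons.2 ⟨fun b hb => ?_, ih hys⟩
      rcases mem_of_mem_rowInsert_fst hb with rfl | hb <;> grind

/-- Row insertion of `x` into a sorted row keeps the entries `≤ x` and writes `x` just after
them, so for `v ≥ x` it can only raise the number of entries `≤ v` to that position plus one. -/
theorem countP_rowInsert_fst {r : List ℕ} (hr : r.Pairwise (· ≤ ·)) (x v : ℕ) :
    (rowInsert x r).1.countP (· ≤ v) =
      if x ≤ v then max (r.countP (· ≤ v)) (r.countP (· ≤ x) + 1) else r.countP (· ≤ v) := by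
  induction r with
  | nil => by_cases x ≤ v <;> simp [rowInsert, *]
  | cons y ys ih =>
    obtain ⟨hy, hys⟩ := pairwise_cons.1 hr
    have hzero : ∀ u < y, ys.countP (· ≤ u) = 0 := fun u hu =>
      countP_eq_zero.2 fun a ha => by grind
    by_cases hxy : x < y
    · rw [rowInsert, if_pos hxy]
      simp only [countP_cons, hzero x hxy, decide_eq_true_eq]
      split_ifs <;> first | omega | (have := hzero v (by omega); omega)
    · rw [rowInsert, if_neg hxy]
      simp only [countP_cons, ih hys, decide_eq_true_eq]
      split_ifs <;> omega

theorem pairwise_firstRow (w : List ℕ) : (firstRow w).Pairwise (· ≤ ·) := by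
  induction w using reverseRecOn with
  | nil => simp [firstRow]
  | append_singleton w x ih => rw [firstRow_append_singleton]; exact pairwise_rowInsert_fst x ih

theorem firstRow_subset (w : List ℕ) : firstRow w ⊆ w := by
  induction w using reverseRecOn with
  | nil => simp [firstRow]
  | append_singleton w x ih =>
    intro a ha
    rw [firstRow_append_singleton] at ha
    rcases mem_of_mem_rowInsert_fst ha with rfl | h
    · exact mem_append_right w (mem_singleton_self a)
    · exact mem_append_left [x] (ih h)

theorem length_le_countP_firstRow {w s : List ℕ} (hs : s <+ w) (hsort : s.Pairwise (· ≤ ·))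
    {v : ℕ} (hv : ∀ a ∈ s, a ≤ v) : s.length ≤ (firstRow w).countP (· ≤ v) := by
  induction w using reverseRecOn generalizing s v with
  | nil => simp [sublist_nil.1 hs]
  | append_singleton w x ih =>
    rw [firstRow_append_singleton, countP_rowInsert_fst (pairwise_firstRow w)]
    obtain ⟨s₁, s₂, rfl, hs₁, hs₂⟩ := sublist_append_iff.1 hs
    have hsort₁ := hsort.sublist (sublist_append_left s₁ s₂)
    rcases sublist_singleton.1 hs₂ with rfl | rfl
    · have := ih hs₁ hsort₁ (by simpa using hv)
      simp only [append_nil]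
      split_ifs <;> omega
    · have hxv : x ≤ v := hv x (by simp)
      have := ih hs₁ hsort₁ fun a ha => (pairwise_append.1 hsort).2.2 a ha x (mem_singleton_self x)
      simp only [if_pos hxv, length_append, length_singleton]
      omega

theorem exists_sublist_length_eq_countP_firstRow (w : List ℕ) (v : ℕ) :
    ∃ s, s <+ w ∧ s.Pairwise (· ≤ ·) ∧ (∀ a ∈ s, a ≤ v) ∧
      s.length = (firstRow w).countP (· ≤ v) := by
  induction w using reverseRecOn generalizing v with
  | nil => exact ⟨[], by simp [firstRow]⟩
  | append_singleton w x ih =>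
    rw [firstRow_append_singleton, countP_rowInsert_fst (pairwise_firstRow w)]
    by_cases hx : x ≤ v ∧ (firstRow w).countP (· ≤ v) < (firstRow w).countP (· ≤ x) + 1
    · obtain ⟨s, hs, hsort, hsx, hlen⟩ := ih x
      refine ⟨s ++ [x], hs.append (Sublist.refl _), ?_, ?_, ?_⟩
      · exact pairwise_append.2 ⟨hsort, by simp, by simpa using hsx⟩
      · grind
      · simp only [if_pos hx.1, length_append, length_singleton]
        omega
    · obtain ⟨s, hs, hsort, hsv, hlen⟩ := ih v
      refine ⟨s, hs.trans (sublist_append_left _ _), hsort, hsv, ?_⟩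
      split_ifs <;> omega

theorem isGreatest_length_firstRow (w : List ℕ) :
    IsGreatest {n | ∃ s, s <+ w ∧ s.Pairwise (· ≤ ·) ∧ s.length = n} (firstRow w).length := by
  have hbound : ∀ a ∈ w, a ≤ w.sum := fun _ => le_sum_of_mem
  constructor
  · obtain ⟨s, hs, hsort, -, hlen⟩ := exists_sublist_length_eq_countP_firstRow w w.sum
    refine ⟨s, hs, hsort, hlen.trans (countP_eq_length.2 fun a ha => ?_)⟩
    simpa using hbound a (firstRow_subset w ha)
  · rintro _ ⟨s, hs, hsort, rfl⟩
    exact (length_le_countP_firstRow hs hsort fun a ha => hbound a (hs.subset ha)).trans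
      countP_le_length

def UpRightStep (u v : ℕ × ℕ) : Prop :=
  v = (u.1 + 1, u.2) ∨ v = (u.1, u.2 + 1)

theorem UpRightStep.lt {u v : ℕ × ℕ} (h : UpRightStep u v) : u < v := by
  rcases h with rfl | rfl <;> simp [Prod.lt_iff]

theorem UpRightStep.toLex_lt {u v : ℕ × ℕ} (h : UpRightStep u v) : toLex u < toLex v := by
  rcases h with rfl | rfl <;> simp [Prod.Lex.toLex_lt_toLex]

theorem exists_upRightStep_chain_of_le {u v : ℕ × ℕ} (h : u ≤ v) :
    ∃ q, (u :: q).IsChain UpRightStep ∧ (u :: q).getLast? = some v := by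
  induction hd : v.1 + v.2 - (u.1 + u.2) generalizing u with
  | zero => exact ⟨[], by simp, by simp [le_antisymm h (by grind [Prod.le_def])]⟩
  | succ d ih =>
    obtain ⟨u', hstep, hu'⟩ : ∃ u', UpRightStep u u' ∧ u' ≤ v := by
      by_cases h₁ : u.1 < v.1
      · exact ⟨(u.1 + 1, u.2), Or.inl rfl, by grind [Prod.le_def]⟩
      · exact ⟨(u.1, u.2 + 1), Or.inr rfl, by grind [Prod.le_def]⟩
    obtain ⟨q, hq, hlast⟩ := ih hu' (by rcases hstep with rfl | rfl <;> simp <;> omega)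
    exact ⟨u' :: q, hq.cons_cons hstep, by simpa using hlast⟩

theorem exists_upRightStep_chain_superset {u : ℕ × ℕ} {l : List (ℕ × ℕ)}
    (hl : (u :: l).IsChain (· ≤ ·)) :
    ∃ q, (u :: q).IsChain UpRightStep ∧ (u :: q).getLast? = (u :: l).getLast? ∧ l ⊆ u :: q := by
  induction l generalizing u with
  | nil => exact ⟨[], by simp⟩
  | cons v l ih =>
    obtain ⟨q₁, hq₁, hlast₁⟩ := exists_upRightStep_chain_of_le hl.rel
    obtain ⟨q₂, hq₂, hlast₂, hsub⟩ := ih hl.tail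
    refine ⟨q₁ ++ q₂, ?_, ?_, ?_⟩
    · rw [← cons_append]
      refine hq₁.append hq₂.tail fun x hx y hy => ?_
      rw [hlast₁, Option.mem_some_iff] at hx
      exact hx ▸ (isChain_cons.1 hq₂).1 y hy
    · rw [← cons_append, getLast?_append, hlast₁, getLast?_cons_cons, ← hlast₂, getLast?_cons]
      cases q₂.getLast? <;> rfl
    · have hv : v ∈ u :: q₁ := mem_of_getLast? hlast₁
      grind

theorem IsUpRightPath.isChain {M N : ℕ} {p : List (ℕ × ℕ)} (hp : IsUpRightPath M N p) :
    p.IsChain UpRightStep :=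
  hp.2.2

theorem IsUpRightPath.pairwise_lt {M N : ℕ} {p : List (ℕ × ℕ)} (hp : IsUpRightPath M N p) :
    p.Pairwise (· < ·) :=
  (hp.isChain.imp fun _ _ h => h.lt).pairwise

theorem IsUpRightPath.pairwise_toLex_lt {M N : ℕ} {p : List (ℕ × ℕ)}
    (hp : IsUpRightPath M N p) : p.Pairwise fun u v => toLex u < toLex v :=
  pairwise_map.1 ((isChain_map toLex).2 (hp.isChain.imp fun _ _ h => h.toLex_lt)).pairwise

theorem IsUpRightPath.nodup {M N : ℕ} {p : List (ℕ × ℕ)} (hp : IsUpRightPath M N p) :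
    p.Nodup :=
  hp.pairwise_lt.imp ne_of_lt

theorem IsUpRightPath.mem_Icc {M N : ℕ} {p : List (ℕ × ℕ)} (hp : IsUpRightPath M N p)
    {c : ℕ × ℕ} (hc : c ∈ p) : c ∈ Set.Icc (1, 1) (M, N) := by
  have hle : p.Pairwise (· ≤ ·) := hp.pairwise_lt.imp le_of_lt
  obtain ⟨hhead, hlast, -⟩ := hp
  constructor
  · exact head_of_head?_eq_some hhead ▸ hle.rel_head hc
  · exact getLast_of_getLast?_eq_some hlast ▸ hle.rel_getLast hc

theorem exists_isUpRightPath_superset {M N : ℕ} (hM : 1 ≤ M) (hN : 1 ≤ N)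
    {t : List (ℕ × ℕ)} (ht : t.Pairwise (· ≤ ·)) (hbound : ∀ c ∈ t, c ∈ Set.Icc (1, 1) (M, N)) :
    ∃ p, IsUpRightPath M N p ∧ t ⊆ p := by
  have hchain : ((1, 1) :: (t ++ [(M, N)])).IsChain (· ≤ ·) := by
    refine Pairwise.isChain (pairwise_cons.2 ⟨?_, pairwise_append.2 ⟨ht, by simp, ?_⟩⟩)
    · intro c hc
      rcases mem_append.1 hc with hc | hc
      · exact (hbound c hc).1
      · simp_all [Prod.le_def]
    · intro c hc d hd
      rw [mem_singleton.1 hd]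
      exact (hbound c hc).2
  obtain ⟨q, hq, hlast, hsub⟩ := exists_upRightStep_chain_superset hchain
  refine ⟨(1, 1) :: q, ⟨rfl, by simp [hlast, getLast?_cons], hq⟩, ?_⟩
  exact fun c hc => hsub (mem_append_left _ hc)

def gridCells (M : ℕ) : List (ℕ × ℕ) :=
  (range M).flatMap fun i => (range M).map fun j => (i + 1, j + 1)

/-- The biword of the matrix: each letter of `matrixWord M w` tagged with the cell it comes from. -/
def cellWord (M : ℕ) (w : ℕ × ℕ → ℕ) : List (ℕ × ℕ) :=
  (gridCells M).flatMap fun c => replicate (w c) c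

theorem map_snd_cellWord (M : ℕ) (w : ℕ × ℕ → ℕ) :
    (cellWord M w).map Prod.snd = matrixWord M w := by
  simp [cellWord, gridCells, matrixWord, map_flatMap, flatMap_assoc, flatMap_map]

theorem mem_gridCells {M : ℕ} {c : ℕ × ℕ} : c ∈ gridCells M ↔ c ∈ Set.Icc (1, 1) (M, M) := by
  obtain ⟨a, b⟩ := c
  simp only [gridCells, mem_flatMap, mem_map, mem_range, Prod.mk.injEq, Set.mem_Icc,
    Prod.mk_le_mk]
  constructor
  · rintro ⟨i, hi, j, hj, rfl, rfl⟩
    omega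
  · rintro ⟨⟨ha, hb⟩, ha', hb'⟩
    exact ⟨a - 1, by omega, b - 1, by omega, by omega, by omega⟩

theorem pairwise_toLex_lt_gridCells (M : ℕ) :
    (gridCells M).Pairwise fun u v => toLex u < toLex v := by
  refine pairwise_flatMap.2 ⟨fun i _ => ?_, pairwise_lt_range.imp fun hij => ?_⟩
  · exact pairwise_map.2 (pairwise_lt_range.imp fun hjk => by simpa [Prod.Lex.toLex_lt_toLex])
  · simp [Prod.Lex.toLex_lt_toLex, hij]

theorem pairwise_toLex_le_cellWord (M : ℕ) (w : ℕ × ℕ → ℕ) :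
    (cellWord M w).Pairwise fun u v => toLex u ≤ toLex v := by
  refine pairwise_flatMap.2 ⟨fun c _ => ?_, (pairwise_toLex_lt_gridCells M).imp fun hcd => ?_⟩
  · exact pairwise_replicate.2 (Or.inr le_rfl)
  · intro x hx y hy
    rw [eq_of_mem_replicate hx, eq_of_mem_replicate hy]
    exact hcd.le

theorem count_cellWord_le (M : ℕ) (w : ℕ × ℕ → ℕ) (c : ℕ × ℕ) : (cellWord M w).count c ≤ w c := by
  have hnodup : (gridCells M).Nodup := (pairwise_toLex_lt_gridCells M).imp fun h => by
    rintro rfl; exact lt_irrefl _ h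
  rw [cellWord, count_flatMap, sum_map_eq_nsmul_single c _ fun d hdc _ => by
    simp [count_replicate, hdc]]
  -- `sum_map_eq_nsmul_single` counts with the `BEq` instance derived from `DecidableEq`.
  have := @nodup_iff_count_le_one (ℕ × ℕ) instBEqOfDecidableEq _
  simpa using Nat.mul_le_mul_right (w c) ((this.1 hnodup) c)

theorem IsUpRightPath.sublist_gridCells {M : ℕ} {p : List (ℕ × ℕ)} (hp : IsUpRightPath M M p) :
    p <+ gridCells M := by
  have : Std.Antisymm fun u v : ℕ × ℕ => toLex u < toLex v :=
    ⟨fun _ _ h h' => absurd h' (lt_asymm h)⟩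
  exact sublist_of_subperm_of_pairwise
    (hp.nodup.subperm fun c hc => mem_gridCells.2 (hp.mem_Icc hc))
    hp.pairwise_toLex_lt (pairwise_toLex_lt_gridCells M)

theorem exists_sublist_matrixWord_of_isUpRightPath {M : ℕ} (w : ℕ × ℕ → ℕ) {p : List (ℕ × ℕ)}
    (hp : IsUpRightPath M M p) :
    ∃ s, s <+ matrixWord M w ∧ s.Pairwise (· ≤ ·) ∧ s.length = (p.map w).sum := by
  refine ⟨(p.flatMap fun c => replicate (w c) c).map Prod.snd, ?_, ?_, by simp [length_flatMap]⟩
  · rw [← map_snd_cellWord]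
    exact (hp.sublist_gridCells.flatMap _).map _
  · refine pairwise_map.2 (pairwise_flatMap.2 ⟨fun c _ => ?_, ?_⟩)
    · exact pairwise_replicate.2 (Or.inr le_rfl)
    · refine hp.pairwise_lt.imp fun hcd x hx y hy => ?_
      rw [eq_of_mem_replicate hx, eq_of_mem_replicate hy]
      exact hcd.le.2

theorem exists_isUpRightPath_of_sublist_matrixWord {M : ℕ} (hM : 1 ≤ M) {w : ℕ × ℕ → ℕ}
    {s : List ℕ} (hs : s <+ matrixWord M w) (hsort : s.Pairwise (· ≤ ·)) :
    ∃ p, IsUpRightPath M M p ∧ s.length ≤ (p.map w).sum := by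
  rw [← map_snd_cellWord] at hs
  obtain ⟨t, ht, rfl⟩ := sublist_map_iff.1 hs
  have hle : t.Pairwise (· ≤ ·) := by
    refine ((pairwise_toLex_le_cellWord M w).sublist ht).and (pairwise_map.1 hsort) |>.imp ?_
    rintro u v ⟨hlex, h₂⟩
    rcases Prod.Lex.toLex_le_toLex.1 hlex with h₁ | ⟨h₁, -⟩ <;> exact ⟨h₁.le, h₂⟩
  have hgrid : ∀ c ∈ t, c ∈ Set.Icc (1, 1) (M, M) := fun c hc => by
    obtain ⟨d, hd, hcd⟩ := mem_flatMap.1 (ht.subset hc)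
    exact eq_of_mem_replicate hcd ▸ mem_gridCells.1 hd
  obtain ⟨p, hp, htp⟩ := exists_isUpRightPath_superset hM hM hle hgrid
  refine ⟨p, hp, ?_⟩
  calc (t.map Prod.snd).length = ∑ c ∈ t.toFinset, t.count c := by
        rw [length_map]
        -- the two sides count with different (lawful) `BEq` instances
        convert (sum_toFinset_count_eq_length t).symm
    _ ≤ ∑ c ∈ t.toFinset, w c :=
        Finset.sum_le_sum fun c _ => (ht.count_le c).trans (count_cellWord_le M w c)
    _ ≤ ∑ c ∈ p.toFinset, w c :=
        Finset.sum_le_sum_of_subset (fun c hc => mem_toFinset.2 (htp (mem_toFinset.1 hc)))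
    _ = (p.map w).sum := sum_toFinset w hp.nodup

/-- Under the RSK correspondence applied to the `M × M` nonnegative integer matrix
`(w(i,j))`, the length `λ_1` of the first row of the common shape of the resulting
pair of semistandard tableaux equals the maximum of `∑_{(i,j) ∈ π} w(i,j)` over
up/right paths `π` from `(1,1)` to `(M,M)`. -/
theorem rsk_first_row_eq_last_passage (M : ℕ) (hM : 1 ≤ M) (w : ℕ × ℕ → ℕ) :
    ((rskTableau (matrixWord M w)).headD []).length =
      sSup {s : ℕ | ∃ p : List (ℕ × ℕ),
        IsUpRightPath M M p ∧ s = (p.map w).sum} := by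
  rw [headD_rskTableau]
  obtain ⟨⟨s, hs, hsort, hlen⟩, hmax⟩ := isGreatest_length_firstRow (matrixWord M w)
  have hpath_le : ∀ p, IsUpRightPath M M p → (p.map w).sum ≤ (firstRow (matrixWord M w)).length :=
    fun p hp => by
      obtain ⟨s', hs', hsort', hlen'⟩ := exists_sublist_matrixWord_of_isUpRightPath w hp
      exact mem_upperBounds.1 hmax _ ⟨s', hs', hsort', hlen'⟩
  obtain ⟨p, hp, hle⟩ := exists_isUpRightPath_of_sublist_matrixWord hM hs hsort
  symm
  refine IsGreatest.csSup_eq ⟨⟨p, hp, le_antisymm (hlen ▸ hle) (hpath_le p hp)⟩, ?_⟩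
  rintro _ ⟨p, hp, rfl⟩
  exact hpath_le p hp
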